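/- arXiv:2008.09998 — 7 statements merged into one kernel-verified Lean document; each statement's English description precedes it below -/
import Mathlib

section
/- Let T be a tree with bipartition classes A and B such that |A| ≤ |B| and every vertex of A has degree at least 2. Then T has a matching saturating A, i.e., the matching number ν(T) equals |A|. -/
/-!
Root the tree anywhere. A vertex has at most one neighbour closer to the root, since the unique
path from the root to it passes through that neighbour last; so a vertex of degree at least two has
a child, and distinct vertices have distinct children. Matching each vertex of the independent
set `A` to one of its children saturates `A`. Conversely every edge meets `A`, and the edges of a
matching meet it in distinct vertices.
-/

/-- `M` is a matching in `G`: a set of edges of `G` that are pairwise vertex-disjoint. -/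
def IsMatchingIn {V : Type*} (G : SimpleGraph V) (M : Finset (Sym2 V)) : Prop :=
  (∀ e ∈ M, e ∈ G.edgeSet) ∧
    (M : Set (Sym2 V)).Pairwise fun e f => ∀ v, ¬(v ∈ e ∧ v ∈ f)

open SimpleGraph

section

variable {V : Type*} {G : SimpleGraph V}

lemma IsMatchingIn.card_le_of_forall_exists_mem {M : Finset (Sym2 V)} (hM : IsMatchingIn G M)
    {C : Finset V} (hC : ∀ e ∈ G.edgeSet, ∃ v ∈ C, v ∈ e) : M.card ≤ C.card :=
  Finset.card_le_card_of_forall_subsingleton (fun e v => v ∈ e)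
    (fun e he => hC e (hM.1 e he))
    (fun v _ _ he _ he' => by
      by_contra hne
      exact hM.2 he.1 he'.1 hne v ⟨he.2, he'.2⟩)

lemma isMatchingIn_image_of_injOn [DecidableEq V] {S : Finset V} {f : V → V}
    (hadj : ∀ a ∈ S, G.Adj a (f a)) (hout : ∀ a ∈ S, f a ∉ S) (hinj : Set.InjOn f S) :
    IsMatchingIn G (S.image fun a => s(a, f a)) := by
  refine ⟨fun e he => ?_, ?_⟩
  · obtain ⟨a, ha, rfl⟩ := Finset.mem_image.mp he
    exact hadj a ha
  · rintro _ he _ he' hne v ⟨hv, hv'⟩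
    simp only [Finset.coe_image, Set.mem_image, Finset.mem_coe] at he he'
    obtain ⟨a, ha, rfl⟩ := he
    obtain ⟨a', ha', rfl⟩ := he'
    rw [Sym2.mem_iff] at hv hv'
    rcases hv with h | h <;> rcases hv' with h' | h'
    · exact hne (by rw [← h, ← h'])
    · exact hout a' ha' (by rwa [← h', h])
    · exact hout a ha (by rwa [← h, h'])
    · exact hne (by rw [hinj ha ha' (h.symm.trans h')])

lemma card_image_sym2_mk_of_forall_notMem {S : Finset V} [DecidableEq V] {f : V → V}
    (hout : ∀ a ∈ S, f a ∉ S) : (S.image fun a => s(a, f a)).card = S.card := by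
  refine Finset.card_image_of_injOn fun a ha a' ha' h => ?_
  rcases Sym2.eq_iff.mp h with ⟨h, -⟩ | ⟨h, -⟩
  · exact h
  · exact absurd (h ▸ ha) (hout a' ha')

namespace SimpleGraph.IsTree

lemma eq_of_adj_of_dist_eq_dist_add_one (hG : G.IsTree) {r a a' b : V}
    (ha : G.Adj a b) (ha' : G.Adj a' b)
    (hd : G.dist r b = G.dist r a + 1) (hd' : G.dist r b = G.dist r a' + 1) : a = a' := by
  obtain ⟨p, -, hp⟩ := hG.connected.exists_path_of_dist r a
  obtain ⟨p', -, hp'⟩ := hG.connected.exists_path_of_dist r a'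
  have hpath : (p.concat ha).IsPath :=
    (p.concat ha).isPath_of_length_eq_dist (by rw [Walk.length_concat, hp, hd])
  have hpath' : (p'.concat ha').IsPath :=
    (p'.concat ha').isPath_of_length_eq_dist (by rw [Walk.length_concat, hp', hd'])
  have := congrArg (fun q : G.Path r b => q.1.penultimate)
    ((hG.isAcyclic.subsingleton_path r b).elim ⟨_, hpath⟩ ⟨_, hpath'⟩)
  simpa [Walk.penultimate_concat] using this

lemma exists_adj_dist_eq_dist_add_one (hG : G.IsTree) (r : V) {a : V}
    [Fintype (G.neighborSet a)] (ha : 2 ≤ G.degree a) :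
    ∃ b, G.Adj a b ∧ G.dist r b = G.dist r a + 1 := by
  rw [← card_neighborFinset_eq_degree] at ha
  obtain ⟨b, hb, b', hb', hne⟩ := Finset.one_lt_card.mp ha
  rw [mem_neighborFinset] at hb hb'
  by_contra! hchild
  have hparent : ∀ c, G.Adj a c → G.dist r a = G.dist r c + 1 := fun c hc =>
    (hG.dist_eq_dist_add_one_of_adj r hc).resolve_right (hchild c hc)
  exact hne (hG.eq_of_adj_of_dist_eq_dist_add_one hb.symm hb'.symm (hparent b hb)
    (hparent b' hb'))

theorem exists_isMatchingIn_card_eq [G.LocallyFinite] (hG : G.IsTree) (S : Finset V)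
    (hdeg : ∀ a ∈ S, 2 ≤ G.degree a) (hind : ∀ a ∈ S, ∀ a' ∈ S, ¬G.Adj a a') :
    ∃ M : Finset (Sym2 V), IsMatchingIn G M ∧ M.card = S.card := by
  classical
  obtain ⟨r⟩ := hG.connected.nonempty
  choose! child hchild using fun a (ha : a ∈ S) =>
    hG.exists_adj_dist_eq_dist_add_one r (hdeg a ha)
  have hout : ∀ a ∈ S, child a ∉ S := fun a ha hc => hind a ha _ hc (hchild a ha).1
  have hinj : Set.InjOn child S := fun a ha a' ha' h =>
    hG.eq_of_adj_of_dist_eq_dist_add_one (hchild a ha).1 (h ▸ (hchild a' ha').1)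
      (hchild a ha).2 (h ▸ (hchild a' ha').2)
  exact ⟨_, isMatchingIn_image_of_injOn (fun a ha => (hchild a ha).1) hout hinj,
    card_image_sym2_mk_of_forall_notMem hout⟩

end SimpleGraph.IsTree

end

theorem stmt1_general {V : Type*} [Fintype V]
    (T : SimpleGraph V) [DecidableRel T.Adj] (hT : T.IsTree)
    (A B : Finset V) (hdisj : Disjoint A B)
    (hbip : ∀ u v, T.Adj u v → (u ∈ A ∧ v ∈ B) ∨ (u ∈ B ∧ v ∈ A))
    (hdeg : ∀ a ∈ A, 2 ≤ T.degree a) :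
    (∃ M : Finset (Sym2 V), IsMatchingIn T M ∧ M.card = A.card) ∧
      (∀ M : Finset (Sym2 V), IsMatchingIn T M → M.card ≤ A.card) := by
  have hind : ∀ a ∈ A, ∀ a' ∈ A, ¬T.Adj a a' := fun a ha a' ha' hadj => by
    rcases hbip a a' hadj with ⟨-, h⟩ | ⟨h, -⟩
    · exact Finset.disjoint_left.mp hdisj ha' h
    · exact Finset.disjoint_left.mp hdisj ha h
  have hcover : ∀ e ∈ T.edgeSet, ∃ v ∈ A, v ∈ e := by
    rintro ⟨u, v⟩ huv
    rcases hbip u v huv with ⟨hu, -⟩ | ⟨-, hv⟩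
    · exact ⟨u, hu, Sym2.mem_mk_left u v⟩
    · exact ⟨v, hv, Sym2.mem_mk_right u v⟩
  exact ⟨hT.exists_isMatchingIn_card_eq A hdeg hind,
    fun M hM => hM.card_le_of_forall_exists_mem hcover⟩

theorem stmt1 {V : Type*} [Fintype V] [DecidableEq V]
    (T : SimpleGraph V) [DecidableRel T.Adj] (hT : T.IsTree)
    (A B : Finset V) (hdisj : Disjoint A B) (hcover : ∀ v, v ∈ A ∨ v ∈ B)
    (hbip : ∀ u v, T.Adj u v → (u ∈ A ∧ v ∈ B) ∨ (u ∈ B ∧ v ∈ A))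
    (hAB : A.card ≤ B.card) (hdeg : ∀ a ∈ A, 2 ≤ T.degree a) :
    (∃ M : Finset (Sym2 V), IsMatchingIn T M ∧ M.card = A.card) ∧
      (∀ M : Finset (Sym2 V), IsMatchingIn T M → M.card ≤ A.card) :=
  stmt1_general T hT A B hdisj hbip hdeg
end

section
/- Let T be a tree with bipartition classes A and B such that |A| ≤ |B| and every vertex of A has degree at least 2. Then the minimum vertex cover number β(T) equals |A|. -/
/-
Root the tree at any vertex `r` and let the parent of `v` be the next vertex on the path from
`v` to `r`. A vertex `a` of degree at least 2 has a neighbour other than its parent, and that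
neighbour is a child of `a`; since the parent map is a left inverse of this choice of children,
the edges from each `a ∈ A` to a child form a matching saturating `A` (the children lie in `B`).
Every vertex cover meets each of these disjoint edges, so it has at least `|A|` vertices, and `A`
itself is a cover because `B` is independent.
-/

/-- `C` is a vertex cover of `G`: every edge of `G` has an endpoint in `C`. -/
def IsVertexCover {V : Type*} (G : SimpleGraph V) (C : Finset V) : Prop :=
  ∀ e ∈ G.edgeSet, ∃ v ∈ C, v ∈ e

section VertexCover

variable {V : Type*} {G : SimpleGraph V} {C : Finset V}

theorem isVertexCover_iff_forall_adj :
    IsVertexCover G C ↔ ∀ u v, G.Adj u v → u ∈ C ∨ v ∈ C := by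
  refine ⟨fun hC u v huv => ?_, fun hC e he => ?_⟩
  · obtain ⟨w, hw, hwe⟩ := hC s(u, v) huv
    rcases Sym2.mem_iff.1 hwe with rfl | rfl
    exacts [Or.inl hw, Or.inr hw]
  · induction e with
    | _ u v =>
      rcases hC u v he with hu | hv
      exacts [⟨u, hu, Sym2.mem_mk_left u v⟩, ⟨v, hv, Sym2.mem_mk_right u v⟩]

theorem IsVertexCover.card_le_of_injOn (hC : IsVertexCover G C) {S : Finset V} (f : V → V)
    (hadj : ∀ a ∈ S, G.Adj a (f a)) (hinj : Set.InjOn f S) (hfS : ∀ a ∈ S, f a ∉ S) :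
    S.card ≤ C.card := by
  have hmeet : ∀ a ∈ S, ∃ c ∈ C, c = a ∨ c = f a := fun a ha =>
    (isVertexCover_iff_forall_adj.1 hC a (f a) (hadj a ha)).elim
      (fun h => ⟨a, h, Or.inl rfl⟩) (fun h => ⟨f a, h, Or.inr rfl⟩)
  choose! c hcC hc using hmeet
  refine Finset.card_le_card_of_injOn c hcC fun a ha a' ha' hcc => ?_
  rcases hc a ha with h | h <;> rcases hc a' ha' with h' | h'
  · rw [← h, ← h', hcc]
  · exact absurd (show f a' ∈ S by rw [← h', ← hcc, h]; exact ha) (hfS a' ha')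
  · exact absurd (show f a ∈ S by rw [← h, hcc, h']; exact ha') (hfS a ha)
  · exact hinj ha ha' (by rw [← h, ← h', hcc])

end VertexCover

namespace SimpleGraph.IsTree

variable {V : Type*} {T : SimpleGraph V} (hT : T.IsTree)

/-- The vertex after `v` on the path from `v` to the root `r`; `hT.parent r r = r`. -/
noncomputable def parent (r v : V) : V :=
  (hT.existsUnique_path v r).exists.choose.getVert 1

theorem parent_eq_getVert {r v : V} (p : T.Walk v r) (hp : p.IsPath) :
    hT.parent r v = p.getVert 1 := by
  rw [parent, (hT.existsUnique_path v r).unique (hT.existsUnique_path v r).exists.choose_spec hp]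

theorem parent_eq_of_adj {r a b : V} (hab : T.Adj a b) (hb : b ≠ hT.parent r a) :
    hT.parent r b = a := by
  classical
  obtain ⟨p, hp⟩ := (hT.existsUnique_path a r).exists
  -- If `b` were on the path from `a` to `r`, that path would begin with the unique `a`–`b` path,
  -- the edge `ab`, making `b` the parent of `a`.
  have hbp : b ∉ p.support := by
    intro hbp
    have htake : p.takeUntil b hbp = hab.toWalk :=
      (hT.existsUnique_path a b).unique (hp.takeUntil hbp) hab.isPath_toWalk
    have hsplit := p.take_spec hbp
    rw [htake, Adj.toWalk, Walk.cons_append, Walk.nil_append] at hsplit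
    refine hb ?_
    rw [hT.parent_eq_getVert p hp, ← hsplit, Walk.getVert_cons_succ, Walk.getVert_zero]
  rw [hT.parent_eq_getVert (.cons hab.symm p) (hp.cons hbp), Walk.getVert_cons_succ,
    Walk.getVert_zero]

theorem exists_adj_parent_eq [Fintype V] [DecidableRel T.Adj] (r : V) {a : V}
    (ha : 2 ≤ T.degree a) : ∃ b, T.Adj a b ∧ hT.parent r b = a := by
  obtain ⟨b, hb, hne⟩ := Finset.exists_mem_ne ha (hT.parent r a)
  have hab : T.Adj a b := (T.mem_neighborFinset a b).1 hb
  exact ⟨b, hab, hT.parent_eq_of_adj hab hne⟩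

end SimpleGraph.IsTree

theorem stmt2_general {V : Type*} [Fintype V]
    (T : SimpleGraph V) [DecidableRel T.Adj] (hT : T.IsTree)
    (A B : Finset V) (hdisj : Disjoint A B)
    (hbip : ∀ u v, T.Adj u v → (u ∈ A ∧ v ∈ B) ∨ (u ∈ B ∧ v ∈ A))
    (hdeg : ∀ a ∈ A, 2 ≤ T.degree a) :
    (∃ C : Finset V, IsVertexCover T C ∧ C.card = A.card) ∧
      (∀ C : Finset V, IsVertexCover T C → A.card ≤ C.card) := by
  have hAcover : IsVertexCover T A := isVertexCover_iff_forall_adj.2 fun u v huv =>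
    (hbip u v huv).imp And.left And.right
  refine ⟨⟨A, hAcover, rfl⟩, fun C hC => ?_⟩
  obtain ⟨r⟩ := hT.connected.nonempty
  choose! child hadj hparent using fun a (ha : a ∈ A) => hT.exists_adj_parent_eq r (hdeg a ha)
  refine hC.card_le_of_injOn child hadj
    (fun a ha a' ha' h => by rw [← hparent a ha, h, hparent a' ha']) fun a ha hchild => ?_
  rcases hbip a (child a) (hadj a ha) with ⟨-, hB⟩ | ⟨hB, -⟩
  exacts [Finset.disjoint_left.1 hdisj hchild hB, Finset.disjoint_left.1 hdisj ha hB]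

theorem stmt2 {V : Type*} [Fintype V] [DecidableEq V]
    (T : SimpleGraph V) [DecidableRel T.Adj] (hT : T.IsTree)
    (A B : Finset V) (hdisj : Disjoint A B) (hcover : ∀ v, v ∈ A ∨ v ∈ B)
    (hbip : ∀ u v, T.Adj u v → (u ∈ A ∧ v ∈ B) ∨ (u ∈ B ∧ v ∈ A))
    (hAB : A.card ≤ B.card) (hdeg : ∀ a ∈ A, 2 ≤ T.degree a) :
    (∃ C : Finset V, IsVertexCover T C ∧ C.card = A.card) ∧
      (∀ C : Finset V, IsVertexCover T C → A.card ≤ C.card) :=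
  stmt2_general T hT A B hdisj hbip hdeg
end

section
/- Let k ≥ 1 and let G be a graph that contains no K_{1,k}, no matching of size k, and no two vertex-disjoint copies of K_{1,k-1}. Then e(G) ≤ k² − (3/2)k + 1/2 if k is odd, and e(G) ≤ k² − (3/2)k if k is even. -/
/-- `G` contains a copy of the star `K_{1,m}`: a center `c` with `m` distinct neighbors. -/
def HasStar {V : Type*} (G : SimpleGraph V) (m : ℕ) : Prop :=
  ∃ (c : V) (L : Finset V), L.card = m ∧ c ∉ L ∧ ∀ x ∈ L, G.Adj c x

/-- `G` contains two vertex-disjoint copies of the star `K_{1,m}`. -/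
def HasTwoDisjointStars {V : Type*} [DecidableEq V] (G : SimpleGraph V) (m : ℕ) : Prop :=
  ∃ (c₁ c₂ : V) (L₁ L₂ : Finset V), L₁.card = m ∧ L₂.card = m ∧ c₁ ∉ L₁ ∧ c₂ ∉ L₂ ∧
    (∀ x ∈ L₁, G.Adj c₁ x) ∧ (∀ x ∈ L₂, G.Adj c₂ x) ∧
    Disjoint (insert c₁ L₁) (insert c₂ L₂)

open Finset SimpleGraph

section

open scoped Classical

namespace SimpleGraph

variable {V : Type*} {M N : Finset (Sym2 V)}

noncomputable def matchedVerts (M : Finset (Sym2 V)) : Finset V := M.biUnion Sym2.toFinset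

@[simp]
lemma mem_matchedVerts {x : V} : x ∈ matchedVerts M ↔ ∃ e ∈ M, x ∈ e := by
  simp [matchedVerts]

lemma matchedVerts_mono (h : M ⊆ N) : matchedVerts M ⊆ matchedVerts N :=
  biUnion_subset_biUnion_of_subset_left _ h

lemma matchedVerts_insert (a b : V) :
    matchedVerts (insert s(a, b) M) = insert a (insert b (matchedVerts M)) := by
  ext; simp [or_assoc]

lemma matchedVerts_union (M N : Finset (Sym2 V)) :
    matchedVerts (M ∪ N) = matchedVerts M ∪ matchedVerts N :=
  union_biUnion ..

lemma notMem_of_notMem_matchedVerts {x : V} {e : Sym2 V} (hx : x ∉ matchedVerts M) (hxe : x ∈ e) :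
    e ∉ M :=
  fun he => hx (mem_matchedVerts.2 ⟨e, he, hxe⟩)

lemma card_matchedVerts_le (M : Finset (Sym2 V)) : #(matchedVerts M) ≤ 2 * #M := by
  calc #(matchedVerts M) ≤ ∑ e ∈ M, #e.toFinset := card_biUnion_le
    _ ≤ ∑ _e ∈ M, 2 := sum_le_sum fun e _ => by rw [Sym2.card_toFinset]; split_ifs <;> omega
    _ = 2 * #M := by rw [sum_const, smul_eq_mul, mul_comm]

end SimpleGraph

namespace IsMatchingIn

variable {V : Type*} {H H' : SimpleGraph V} {M N : Finset (Sym2 V)}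

lemma eq_of_mem_of_mem (hM : IsMatchingIn H M) {e f : Sym2 V} (he : e ∈ M) (hf : f ∈ M)
    {x : V} (hxe : x ∈ e) (hxf : x ∈ f) : e = f := by
  by_contra hne
  exact hM.2 he hf hne x ⟨hxe, hxf⟩

lemma notMem_matchedVerts_erase (hM : IsMatchingIn H M) {e : Sym2 V} (he : e ∈ M) {x : V}
    (hx : x ∈ e) : x ∉ matchedVerts (M.erase e) := fun h => by
  obtain ⟨f, hf, hxf⟩ := mem_matchedVerts.1 h
  exact (mem_erase.1 hf).1 (hM.eq_of_mem_of_mem (mem_erase.1 hf).2 he hxf hx)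

lemma exists_eq_adj (hM : IsMatchingIn H M) {e : Sym2 V} (he : e ∈ M) {x : V} (hx : x ∈ e) :
    ∃ y, e = s(x, y) ∧ H.Adj x y := by
  obtain ⟨y, rfl⟩ := Sym2.mem_iff_exists.1 hx
  exact ⟨y, rfl, hM.1 _ he⟩

lemma matchedVerts_subset_support (hM : IsMatchingIn H M) : ↑(matchedVerts M) ⊆ H.support := by
  intro x hx
  obtain ⟨e, he, hxe⟩ := mem_matchedVerts.1 hx
  obtain ⟨y, -, hxy⟩ := hM.exists_eq_adj he hxe
  exact ⟨y, hxy⟩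

lemma subset (hM : IsMatchingIn H M) (h : N ⊆ M) : IsMatchingIn H N :=
  ⟨fun e he => hM.1 e (h he), hM.2.mono (by exact_mod_cast h)⟩

lemma mono (hM : IsMatchingIn H M) (hle : H ≤ H') : IsMatchingIn H' M :=
  ⟨fun e he => edgeSet_mono hle (hM.1 e he), hM.2⟩

lemma empty : IsMatchingIn H ∅ := ⟨by simp, by simp⟩

lemma insert_mk (hM : IsMatchingIn H M) {a b : V} (hab : H.Adj a b) (ha : a ∉ matchedVerts M)
    (hb : b ∉ matchedVerts M) : IsMatchingIn H (insert s(a, b) M) := by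
  simp only [mem_matchedVerts, not_exists, not_and] at ha hb
  refine ⟨?_, ?_⟩
  · simpa [forall_mem_insert] using ⟨hab, hM.1⟩
  · have key : ∀ f ∈ M, ∀ v, v ∈ s(a, b) → v ∉ f := fun f hf v hv hvf => by
      rcases Sym2.mem_iff.1 hv with rfl | rfl
      exacts [ha f hf hvf, hb f hf hvf]
    rw [coe_insert, Set.pairwise_insert]
    exact ⟨hM.2, fun f hf _ => ⟨fun v hv => key f hf v hv.1 hv.2,
      fun v hv => key f hf v hv.2 hv.1⟩⟩

lemma union {M₁ M₂ : Finset (Sym2 V)} (h₁ : IsMatchingIn H M₁)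
    (h₂ : IsMatchingIn H M₂) (hdisj : Disjoint (matchedVerts M₁) (matchedVerts M₂)) :
    IsMatchingIn H (M₁ ∪ M₂) := by
  refine ⟨fun e he => (mem_union.1 he).elim (h₁.1 e) (h₂.1 e), ?_⟩
  have cross : ∀ e ∈ M₁, ∀ f ∈ M₂, ∀ v, ¬(v ∈ e ∧ v ∈ f) := fun e he f hf v hv =>
    Finset.disjoint_left.1 hdisj (mem_matchedVerts.2 ⟨e, he, hv.1⟩)
      (mem_matchedVerts.2 ⟨f, hf, hv.2⟩)
  rw [coe_union, Set.pairwise_union]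
  exact ⟨h₁.2, h₂.2, fun e he f hf _ => ⟨cross e he f hf, fun v hv => cross e he f hf v hv.symm⟩⟩

end IsMatchingIn

namespace SimpleGraph

variable {V : Type*} {H : SimpleGraph V} {M N : Finset (Sym2 V)}

/-- The two possible ends of the path that starts at `z` with an `M`-edge and alternates between
`M` and `N`: an augmenting path for `N`, or a path whose switch turns `M` into a matching `K`
of the same size that misses `z` and covers one new vertex `y` instead. -/
def AugmentsOrExchanges (H : SimpleGraph V) (M N : Finset (Sym2 V)) (z : V) : Prop :=
  (∃ P ⊆ M ∪ N, IsMatchingIn H P ∧ #P = #N + 1) ∨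
    ∃ K ⊆ M ∪ N, ∃ y ∉ matchedVerts M, IsMatchingIn H K ∧ #K = #M ∧
      z ∉ matchedVerts K ∧ insert z (matchedVerts K) = insert y (matchedVerts M)

lemma AugmentsOrExchanges.of_erase (hM : IsMatchingIn H M) (hN : IsMatchingIn H N)
    {z c₁ c₂ : V} (hzN : z ∉ matchedVerts N) (he₀ : s(z, c₁) ∈ M) (hf : s(c₁, c₂) ∈ N)
    (h : AugmentsOrExchanges H (M.erase s(z, c₁)) (N.erase s(c₁, c₂)) c₂) :
    AugmentsOrExchanges H M N z := by
  set M' := M.erase s(z, c₁)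
  set N' := N.erase s(c₁, c₂)
  have hzc₁ : H.Adj z c₁ := hM.1 _ he₀
  have hc₁c₂ : H.Adj c₁ c₂ := hN.1 _ hf
  have hfresh : ∀ X ⊆ M' ∪ N', z ∉ matchedVerts X ∧ c₁ ∉ matchedVerts X := by
    have hzM' := hM.notMem_matchedVerts_erase he₀ (Sym2.mem_mk_left z c₁)
    have hc₁M' := hM.notMem_matchedVerts_erase he₀ (Sym2.mem_mk_right z c₁)
    have hzN' : z ∉ matchedVerts N' := fun h => hzN (matchedVerts_mono (erase_subset _ _) h)
    have hc₁N' := hN.notMem_matchedVerts_erase hf (Sym2.mem_mk_left c₁ c₂)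
    intro X hX
    have hXverts := (matchedVerts_mono hX).trans (matchedVerts_union M' N').le
    exact ⟨fun h => (mem_union.1 (hXverts h)).elim hzM' hzN',
      fun h => (mem_union.1 (hXverts h)).elim hc₁M' hc₁N'⟩
  have hM'N' : M' ∪ N' ⊆ M ∪ N := union_subset_union (erase_subset _ _) (erase_subset _ _)
  rcases h with ⟨P, hPsub, hP, hPcard⟩ | ⟨K, hKsub, y, hyM', hK, hKcard, hc₂K, hKverts⟩
  · obtain ⟨hzP, hc₁P⟩ := hfresh P hPsub
    refine Or.inl ⟨insert s(z, c₁) P, insert_subset (mem_union_left _ he₀) (hPsub.trans hM'N'),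
      hP.insert_mk hzc₁ hzP hc₁P, ?_⟩
    rw [card_insert_of_notMem (notMem_of_notMem_matchedVerts hzP (Sym2.mem_mk_left _ _)), hPcard,
      card_erase_add_one hf]
  obtain ⟨hzK, hc₁K⟩ := hfresh K hKsub
  have hc₂z : c₂ ≠ z := fun h => hzN (mem_matchedVerts.2 ⟨_, hf, h ▸ Sym2.mem_mk_right _ _⟩)
  have hy : y = c₂ ∨ y ∈ matchedVerts K := mem_insert.1 (hKverts ▸ mem_insert_self y _)
  have hM_eq : matchedVerts M = insert z (insert c₁ (matchedVerts M')) := by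
    rw [← matchedVerts_insert, insert_erase he₀]
  refine Or.inr ⟨insert s(c₁, c₂) K, insert_subset (mem_union_right _ hf) (hKsub.trans hM'N'),
    y, ?_, hK.insert_mk hc₁c₂ hc₁K hc₂K, ?_, ?_, ?_⟩
  · rw [hM_eq]
    simp only [mem_insert, not_or]
    refine ⟨?_, ?_, hyM'⟩ <;> rcases hy with rfl | hyK
    exacts [hc₂z, fun h => hzK (h ▸ hyK), hc₁c₂.ne', fun h => hc₁K (h ▸ hyK)]
  · rw [card_insert_of_notMem (notMem_of_notMem_matchedVerts hc₂K (Sym2.mem_mk_right _ _)),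
      hKcard, card_erase_add_one he₀]
  · simp only [matchedVerts_insert, mem_insert, not_or]
    exact ⟨hzc₁.ne, hc₂z.symm, hzK⟩
  · rw [matchedVerts_insert, hKverts, hM_eq, insert_comm c₁ y, insert_comm z y]

lemma _root_.IsMatchingIn.augmentsOrExchanges (hM : IsMatchingIn H M) (hN : IsMatchingIn H N)
    {z : V} (hzN : z ∉ matchedVerts N) : AugmentsOrExchanges H M N z := by
  induction M using Finset.strongInduction generalizing N z with
  | H M ih =>
  by_cases hzM : z ∈ matchedVerts M
  swap
  · exact Or.inr ⟨M, subset_union_left, z, hzM, hM, rfl, hzM, rfl⟩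
  obtain ⟨e₀, he₀, hze₀⟩ := mem_matchedVerts.1 hzM
  obtain ⟨c₁, rfl, hzc₁⟩ := hM.exists_eq_adj he₀ hze₀
  by_cases hc₁N : c₁ ∈ matchedVerts N
  swap
  · exact Or.inl ⟨insert s(z, c₁) N, insert_subset (mem_union_left _ he₀) subset_union_right,
      hN.insert_mk hzc₁ hzN hc₁N,
      card_insert_of_notMem (notMem_of_notMem_matchedVerts hzN (Sym2.mem_mk_left _ _))⟩
  obtain ⟨f, hf, hc₁f⟩ := mem_matchedVerts.1 hc₁N
  obtain ⟨c₂, rfl, -⟩ := hN.exists_eq_adj hf hc₁f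
  exact .of_erase hM hN hzN he₀ hf <| ih _ (erase_ssubset he₀) (hM.subset (erase_subset _ _))
    (hN.subset (erase_subset _ _)) (hN.notMem_matchedVerts_erase hf (Sym2.mem_mk_right c₁ c₂))

lemma isMatchingIn_deleteIncidenceSet_iff {v : V} :
    IsMatchingIn (H.deleteIncidenceSet v) M ↔ IsMatchingIn H M ∧ v ∉ matchedVerts M := by
  refine ⟨fun hM => ⟨hM.mono (H.deleteIncidenceSet_le v), fun hv => ?_⟩, fun ⟨hM, hv⟩ => ⟨?_, hM.2⟩⟩
  · obtain ⟨e, he, hve⟩ := mem_matchedVerts.1 hv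
    obtain ⟨w, rfl, hvw⟩ := hM.exists_eq_adj he hve
    exact (deleteIncidenceSet_adj.1 hvw).2.1 rfl
  · intro e he
    obtain ⟨a, b⟩ := e
    refine deleteIncidenceSet_adj.2 ⟨hM.1 _ he, ?_, ?_⟩ <;> rintro rfl
    exacts [notMem_of_notMem_matchedVerts hv (Sym2.mem_mk_left _ _) he,
      notMem_of_notMem_matchedVerts hv (Sym2.mem_mk_right _ _) he]

variable [Fintype V]

noncomputable def matchingNumber (H : SimpleGraph V) : ℕ :=
  ({M | IsMatchingIn H M} : Finset (Finset (Sym2 V))).sup card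

lemma _root_.IsMatchingIn.card_le_matchingNumber (hM : IsMatchingIn H M) :
    #M ≤ H.matchingNumber :=
  le_sup (f := card) (by simpa using hM)

lemma exists_isMatchingIn_card_eq_matchingNumber (H : SimpleGraph V) :
    ∃ M, IsMatchingIn H M ∧ #M = H.matchingNumber := by
  obtain ⟨M, hM, hcard⟩ := exists_mem_eq_sup ({M | IsMatchingIn H M} : Finset (Finset (Sym2 V)))
    ⟨∅, by simpa using IsMatchingIn.empty⟩ card
  exact ⟨M, by simpa using hM, hcard.symm⟩

lemma _root_.IsMatchingIn.not_adj_of_card_eq_matchingNumber (hM : IsMatchingIn H M)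
    (hMcard : #M = H.matchingNumber) {a b : V} (ha : a ∉ matchedVerts M)
    (hb : b ∉ matchedVerts M) : ¬H.Adj a b := fun hab => by
  have := (hM.insert_mk hab ha hb).card_le_matchingNumber
  rw [card_insert_of_notMem (notMem_of_notMem_matchedVerts ha (Sym2.mem_mk_left a b))] at this
  omega

/-- Along a walk `u, z, …, w`, exchanging at `z` yields either an augmentation or a maximum matching
missing the endpoints of the shorter walk `z, …, w`. -/
lemma _root_.IsMatchingIn.not_reachable_of_notMem_matchedVerts
    (hmiss : ∀ v, ∃ N, IsMatchingIn H N ∧ #N = H.matchingNumber ∧ v ∉ matchedVerts N)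
    (hM : IsMatchingIn H M) (hMcard : #M = H.matchingNumber) {u w : V} (huw : u ≠ w)
    (hu : u ∉ matchedVerts M) (hw : w ∉ matchedVerts M) : ¬H.Reachable u w := by
  rintro ⟨p⟩
  induction p generalizing M with
  | nil => exact huw rfl
  | @cons u z w huz q ih =>
    by_cases hzw : z = w
    · exact hM.not_adj_of_card_eq_matchingNumber hMcard hu (hzw ▸ hw) huz
    by_cases hzM : z ∉ matchedVerts M
    · exact ih hM hMcard hzw hzM hw
    obtain ⟨N, hN, hNcard, hzN⟩ := hmiss z
    rcases hM.augmentsOrExchanges hN hzN with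
      ⟨P, -, hP, hPcard⟩ | ⟨K, -, y, -, hK, hKcard, hzK, hKverts⟩
    · have := hP.card_le_matchingNumber
      omega
    have hKmiss : ∀ x ∉ matchedVerts M, x ≠ y → x ∉ matchedVerts K := fun x hxM hxy hxK => by
      have : x ∈ insert y (matchedVerts M) := hKverts ▸ mem_insert_of_mem hxK
      exact (mem_insert.1 this).elim hxy hxM
    rw [← hKcard] at hMcard
    by_cases hwy : w = y
    · exact hK.not_adj_of_card_eq_matchingNumber hMcard (hKmiss u hu (hwy ▸ huw)) hzK huz
    · exact ih hK hMcard hzw hzK (hKmiss w hw hwy)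

lemma card_support_le_of_forall_exists_notMem_matchedVerts
    (hconn : ∀ u ∈ H.support, ∀ w ∈ H.support, H.Reachable u w)
    (hmiss : ∀ v, ∃ M, IsMatchingIn H M ∧ #M = H.matchingNumber ∧ v ∉ matchedVerts M) :
    #H.support.toFinset ≤ 2 * H.matchingNumber + 1 := by
  by_contra! hcard
  obtain ⟨M, hM, hMcard⟩ := H.exists_isMatchingIn_card_eq_matchingNumber
  have : 1 < #(H.support.toFinset \ matchedVerts M) := by
    have := card_matchedVerts_le M
    have := le_card_sdiff (matchedVerts M) H.support.toFinset
    omega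
  obtain ⟨u, hu, w, hw, huw⟩ := one_lt_card.1 this
  rw [mem_sdiff, Set.mem_toFinset] at hu hw
  exact hM.not_reachable_of_notMem_matchedVerts hmiss hMcard huw hu.2 hw.2 (hconn u hu.1 w hw.1)

lemma matchingNumber_deleteIncidenceSet_add_one {v : V}
    (hv : ∀ M, IsMatchingIn H M → #M = H.matchingNumber → v ∈ matchedVerts M) :
    (H.deleteIncidenceSet v).matchingNumber + 1 = H.matchingNumber := by
  obtain ⟨N, hN, hNcard⟩ := (H.deleteIncidenceSet v).exists_isMatchingIn_card_eq_matchingNumber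
  obtain ⟨hNH, hvN⟩ := isMatchingIn_deleteIncidenceSet_iff.1 hN
  obtain ⟨M, hM, hMcard⟩ := H.exists_isMatchingIn_card_eq_matchingNumber
  obtain ⟨e, he, hve⟩ := mem_matchedVerts.1 (hv M hM hMcard)
  have hM' : IsMatchingIn (H.deleteIncidenceSet v) (M.erase e) :=
    isMatchingIn_deleteIncidenceSet_iff.2
      ⟨hM.subset (erase_subset _ _), hM.notMem_matchedVerts_erase he hve⟩
  have h₁ := hM'.card_le_matchingNumber
  have h₂ := hNH.card_le_matchingNumber
  have h₃ : #N ≠ H.matchingNumber := fun h => hvN (hv N hNH h)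
  rw [← card_erase_add_one he] at hMcard
  omega

variable {H₁ H₂ : SimpleGraph V}

lemma matchingNumber_add_le_of_sup_eq (hsup : H₁ ⊔ H₂ = H)
    (hdisj : Disjoint H₁.support H₂.support) :
    H₁.matchingNumber + H₂.matchingNumber ≤ H.matchingNumber := by
  obtain ⟨M₁, hM₁, hM₁card⟩ := H₁.exists_isMatchingIn_card_eq_matchingNumber
  obtain ⟨M₂, hM₂, hM₂card⟩ := H₂.exists_isMatchingIn_card_eq_matchingNumber
  have hdisjV : Disjoint (matchedVerts M₁) (matchedVerts M₂) := by
    rw [← disjoint_coe]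
    exact hdisj.mono hM₁.matchedVerts_subset_support hM₂.matchedVerts_subset_support
  have hdisjM : Disjoint M₁ M₂ := Finset.disjoint_left.2 fun e he₁ he₂ => by
    obtain ⟨a, b⟩ := e
    exact Finset.disjoint_left.1 hdisjV (mem_matchedVerts.2 ⟨_, he₁, Sym2.mem_mk_left a b⟩)
      (mem_matchedVerts.2 ⟨_, he₂, Sym2.mem_mk_left a b⟩)
  rw [← hM₁card, ← hM₂card, ← card_union_of_disjoint hdisjM]
  exact ((hM₁.mono (hsup ▸ le_sup_left)).union (hM₂.mono (hsup ▸ le_sup_right))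
    hdisjV).card_le_matchingNumber

lemma card_edgeFinset_add_of_sup_eq (hsup : H₁ ⊔ H₂ = H) (hdisj : Disjoint H₁.support H₂.support) :
    #H₁.edgeFinset + #H₂.edgeFinset = #H.edgeFinset := by
  rw [← card_union_of_disjoint]
  · congr 1
    ext e
    simp [← hsup]
  · rw [Finset.disjoint_left]
    rintro ⟨a, b⟩ h₁ h₂
    rw [mem_edgeFinset, mem_edgeSet] at h₁ h₂
    exact Set.disjoint_left.1 hdisj ⟨b, h₁⟩ ⟨b, h₂⟩

/-- The smaller graphs are passed as variables rather than as `H.induce s` or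
`H.deleteIncidenceSet v`, whose decidability instances would differ from the ones `P` is stated
with. -/
theorem gallai_induction {P : SimpleGraph V → Prop}
    (split : ∀ H H₁ H₂ : SimpleGraph V, H₁ ⊔ H₂ = H → Disjoint H₁.support H₂.support →
      P H₁ → P H₂ → P H)
    (delete : ∀ (H H' : SimpleGraph V) (v : V), H' ≤ H →
      #H'.edgeFinset + H.degree v = #H.edgeFinset →
      H'.matchingNumber + 1 = H.matchingNumber → P H' → P H)
    (factorCritical : ∀ H : SimpleGraph V, #H.support.toFinset ≤ 2 * H.matchingNumber + 1 → P H)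
    (H : SimpleGraph V) : P H := by
  induction H using WellFoundedLT.induction with
  | _ H ih =>
  by_cases hconn : ∀ u ∈ H.support, ∀ w ∈ H.support, H.Reachable u w
  · by_cases hmiss : ∀ v, ∃ M, IsMatchingIn H M ∧ #M = H.matchingNumber ∧ v ∉ matchedVerts M
    · exact factorCritical H (card_support_le_of_forall_exists_notMem_matchedVerts hconn hmiss)
    push Not at hmiss
    obtain ⟨v, hv⟩ := hmiss
    obtain ⟨M, hM, hMcard⟩ := H.exists_isMatchingIn_card_eq_matchingNumber
    obtain ⟨e, he, hve⟩ := mem_matchedVerts.1 (hv M hM hMcard)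
    obtain ⟨w, -, hvw⟩ := hM.exists_eq_adj he hve
    refine delete H _ v (H.deleteIncidenceSet_le v) ?_
      (matchingNumber_deleteIncidenceSet_add_one hv) (ih _ ?_)
    · convert Nat.sub_add_cancel (H.degree_le_card_edgeFinset v) using 2
      convert H.card_edgeFinset_deleteIncidenceSet v
    · exact (H.deleteIncidenceSet_le v).lt_of_not_ge fun h =>
        (deleteIncidenceSet_adj.1 (h hvw)).2.1 rfl
  push Not at hconn
  obtain ⟨u, hu, w, hw, huw⟩ := hconn
  obtain ⟨u', huu'⟩ := (H.mem_support).1 hu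
  obtain ⟨w', hww'⟩ := (H.mem_support).1 hw
  let s : Set V := {x | H.Reachable u x}
  have hs : ∀ ⦃a b⦄, H.Adj a b → (a ∈ s ↔ b ∈ s) := fun a b hab =>
    ⟨fun ha => ha.trans hab.reachable, fun hb => hb.trans hab.symm.reachable⟩
  refine split H (H.induce s).spanningCoe (H.induce sᶜ).spanningCoe ?_ ?_ (ih _ ?_) (ih _ ?_)
  · ext a b
    by_cases ha : a ∈ s
    · simpa [ha] using fun h => (hs h).1 ha
    · simpa [ha] using fun h hb => ha ((hs h).2 hb)
  · rw [Set.disjoint_left]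
    rintro a ⟨b, hab⟩ ⟨c, hac⟩
    simp_all
  · exact (spanningCoe_induce_le H s).lt_of_not_ge fun h => by simpa [s, huw] using h hww'
  · exact (spanningCoe_induce_le H sᶜ).lt_of_not_ge fun h => by simpa [s] using h huu'

variable {H' : SimpleGraph V} {D : ℕ}

lemma two_mul_card_edgeFinset_le_card_support_mul (hD : ∀ v, H.degree v ≤ D) :
    2 * #H.edgeFinset ≤ #H.support.toFinset * D := by
  rw [← sum_degrees_eq_twice_card_edges, ← sum_subset (subset_univ H.support.toFinset)]
  · exact sum_le_card_nsmul _ _ _ fun v _ => hD v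
  · intro v _ hv
    simpa [degree_eq_zero_iff_notMem_support] using hv

lemma degree_le_card_support_sub_one (v : V) : H.degree v ≤ #H.support.toFinset - 1 := by
  by_cases hv : v ∈ H.support
  · rw [← card_neighborFinset_eq_degree, ← card_erase_of_mem (Set.mem_toFinset.2 hv)]
    refine card_le_card fun w hw => ?_
    rw [mem_neighborFinset] at hw
    simpa using ⟨hw.ne', v, hw.symm⟩
  · simp [(degree_eq_zero_iff_notMem_support H v).2 hv]

lemma forall_degree_le_of_le (hle : H' ≤ H) (hD : ∀ v, H.degree v ≤ D) (v : V) :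
    H'.degree v ≤ D :=
  (degree_le_of_le hle).trans (hD v)

theorem card_edgeFinset_le_matchingNumber_mul_succ (H : SimpleGraph V) (hD : ∀ v, H.degree v ≤ D) :
    #H.edgeFinset ≤ H.matchingNumber * (D + 1) := by
  induction H using gallai_induction with
  | split H H₁ H₂ hsup hdisj ih₁ ih₂ =>
    have := card_edgeFinset_add_of_sup_eq hsup hdisj
    have := matchingNumber_add_le_of_sup_eq hsup hdisj
    have := ih₁ (forall_degree_le_of_le (hsup ▸ le_sup_left) hD)
    have := ih₂ (forall_degree_le_of_le (hsup ▸ le_sup_right) hD)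
    nlinarith
  | delete H H' v hle hcard hν ih =>
    have := ih (forall_degree_le_of_le hle hD)
    have := hD v
    nlinarith
  | factorCritical H hcard =>
    set m := min D (#H.support.toFinset - 1)
    have h := two_mul_card_edgeFinset_le_card_support_mul (D := m) fun v =>
      le_min (hD v) (degree_le_card_support_sub_one v)
    have hmD : m ≤ D := min_le_left _ _
    have hmν : m ≤ 2 * H.matchingNumber := (min_le_right _ _).trans (by omega)
    nlinarith

def ClosedNbhdsMeetAtDegree (H : SimpleGraph V) (D : ℕ) : Prop :=
  ∀ u w, H.degree u = D → H.degree w = D → ∃ x, (x = u ∨ H.Adj u x) ∧ (x = w ∨ H.Adj w x)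

lemma adj_of_le_of_degree_le (hle : H' ≤ H) {v w : V} (hdeg : H.degree v ≤ H'.degree v)
    (hadj : H.Adj v w) : H'.Adj v w := by
  have hsub : H'.neighborFinset v ⊆ H.neighborFinset v := fun x hx => by
    simpa using hle (by simpa using hx)
  have heq := eq_of_subset_of_card_le hsub (by simpa only [card_neighborFinset_eq_degree])
  exact (H'.mem_neighborFinset v w).1 (heq ▸ (H.mem_neighborFinset v w).2 hadj)

namespace ClosedNbhdsMeetAtDegree

lemma exists_of_le (hmeet : H.ClosedNbhdsMeetAtDegree D) (hD : ∀ v, H.degree v ≤ D)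
    (h₁ : H₁ ≤ H) (h₂ : H₂ ≤ H) {u w : V} (hu : H₁.degree u = D) (hw : H₂.degree w = D) :
    ∃ x, (x = u ∨ H₁.Adj u x) ∧ (x = w ∨ H₂.Adj w x) := by
  obtain ⟨x, hxu, hxw⟩ := hmeet u w (le_antisymm (hD u) (hu ▸ degree_le_of_le h₁))
    (le_antisymm (hD w) (hw ▸ degree_le_of_le h₂))
  exact ⟨x, hxu.imp_right (adj_of_le_of_degree_le h₁ (hu ▸ hD u)),
    hxw.imp_right (adj_of_le_of_degree_le h₂ (hw ▸ hD w))⟩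

lemma mono (hmeet : H.ClosedNbhdsMeetAtDegree D) (hD : ∀ v, H.degree v ≤ D) (hle : H' ≤ H) :
    H'.ClosedNbhdsMeetAtDegree D :=
  fun _ _ hu hw => hmeet.exists_of_le hD hle hle hu hw

lemma forall_degree_lt_or_forall_degree_lt (hmeet : H.ClosedNbhdsMeetAtDegree D)
    (hD : ∀ v, H.degree v ≤ D) (hD0 : 0 < D) (hsup : H₁ ⊔ H₂ = H)
    (hdisj : Disjoint H₁.support H₂.support) :
    (∀ v, H₁.degree v < D) ∨ ∀ v, H₂.degree v < D := by
  by_contra! h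
  obtain ⟨⟨u, hu⟩, ⟨w, hw⟩⟩ := h
  have h₁ : H₁ ≤ H := hsup ▸ le_sup_left
  have h₂ : H₂ ≤ H := hsup ▸ le_sup_right
  obtain ⟨x, hxu, hxw⟩ := hmeet.exists_of_le hD h₁ h₂
    (le_antisymm (forall_degree_le_of_le h₁ hD u) hu)
    (le_antisymm (forall_degree_le_of_le h₂ hD w) hw)
  have hsupp : ∀ {G : SimpleGraph V} {a b : V}, D ≤ G.degree a → (b = a ∨ G.Adj a b) →
      b ∈ G.support := by
    rintro G a b ha (rfl | hab)
    · exact (G.mem_support).2 ((G.degree_pos_iff_exists_adj b).1 (hD0.trans_le ha))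
    · exact ⟨a, hab.symm⟩
  exact Set.disjoint_left.1 hdisj (hsupp hu hxu) (hsupp hw hxw)

end ClosedNbhdsMeetAtDegree

theorem two_mul_card_edgeFinset_le_of_closedNbhdsMeetAtDegree (H : SimpleGraph V)
    (hD : ∀ v, H.degree v ≤ D) (hmeet : H.ClosedNbhdsMeetAtDegree D) :
    2 * #H.edgeFinset ≤ (2 * H.matchingNumber + 1) * D := by
  obtain rfl | hD0 := D.eq_zero_or_pos
  · simpa using two_mul_card_edgeFinset_le_card_support_mul hD
  induction H using gallai_induction with
  | split H H₁ H₂ hsup hdisj ih₁ ih₂ =>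
    have h₁ : H₁ ≤ H := hsup ▸ le_sup_left
    have h₂ : H₂ ≤ H := hsup ▸ le_sup_right
    have := card_edgeFinset_add_of_sup_eq hsup hdisj
    have := matchingNumber_add_le_of_sup_eq hsup hdisj
    have := ih₁ (forall_degree_le_of_le h₁ hD) (hmeet.mono hD h₁)
    have := ih₂ (forall_degree_le_of_le h₂ hD) (hmeet.mono hD h₂)
    rcases hmeet.forall_degree_lt_or_forall_degree_lt hD hD0 hsup hdisj with h | h
    · have := card_edgeFinset_le_matchingNumber_mul_succ H₁ (D := D - 1) fun v => by
        have := h v; omega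
      rw [Nat.sub_add_cancel hD0] at this
      nlinarith
    · have := card_edgeFinset_le_matchingNumber_mul_succ H₂ (D := D - 1) fun v => by
        have := h v; omega
      rw [Nat.sub_add_cancel hD0] at this
      nlinarith
  | delete H H' v hle hcard hν ih =>
    have := ih (forall_degree_le_of_le hle hD) (hmeet.mono hD hle)
    have := hD v
    nlinarith
  | factorCritical H hcard =>
    calc 2 * #H.edgeFinset ≤ #H.support.toFinset * D :=
          two_mul_card_edgeFinset_le_card_support_mul hD
      _ ≤ (2 * H.matchingNumber + 1) * D := Nat.mul_le_mul_right D hcard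

end SimpleGraph

variable {V : Type*} [Fintype V] {G : SimpleGraph V}

lemma degree_lt_of_not_hasStar {k : ℕ} (h : ¬HasStar G k) (v : V) : G.degree v < k := by
  by_contra! hk
  rw [← card_neighborFinset_eq_degree] at hk
  obtain ⟨L, hL, hLcard⟩ := exists_subset_card_eq hk
  exact h ⟨v, L, hLcard, fun hv => G.loopless.irrefl v ((G.mem_neighborFinset v v).1 (hL hv)),
    fun x hx => (G.mem_neighborFinset v x).1 (hL hx)⟩

lemma closedNbhdsMeetAtDegree_of_not_hasTwoDisjointStars [DecidableEq V] {m : ℕ}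
    (h : ¬HasTwoDisjointStars G m) : G.ClosedNbhdsMeetAtDegree m := by
  intro u w hu hw
  by_contra! hdisj
  refine h ⟨u, w, G.neighborFinset u, G.neighborFinset w, by simpa using hu, by simpa using hw,
    by simp, by simp, by simp, by simp, ?_⟩
  rw [Finset.disjoint_left]
  intro x hxu hxw
  simp only [mem_insert, mem_neighborFinset] at hxu hxw
  exact hxw.elim (hdisj x hxu).1 (hdisj x hxu).2

end

lemma le_of_two_mul_le_of_parity {e k : ℕ} (h : 2 * e ≤ (2 * (k - 1) + 1) * (k - 1)) :
    (Odd k → e ≤ k ^ 2 - (3 * k - 1) / 2) ∧ (Even k → e ≤ k ^ 2 - 3 * k / 2) := by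
  constructor
  · rintro ⟨r, rfl⟩
    rw [Nat.add_sub_cancel] at h
    ring_nf at h ⊢
    omega
  · rintro ⟨_ | r, rfl⟩
    · simp_all
    rw [show r + 1 + (r + 1) - 1 = 2 * r + 1 by omega] at h
    ring_nf at h ⊢
    omega

theorem stmt6_general {V : Type*} [Fintype V] [DecidableEq V]
    (G : SimpleGraph V) [DecidableRel G.Adj] (k : ℕ)
    (hstar : ¬ HasStar G k)
    (hmatch : ∀ M : Finset (Sym2 V), IsMatchingIn G M → M.card < k)
    (h2star : ¬ HasTwoDisjointStars G (k - 1)) :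
    (Odd k → G.edgeFinset.card ≤ k ^ 2 - (3 * k - 1) / 2) ∧
      (Even k → G.edgeFinset.card ≤ k ^ 2 - 3 * k / 2) := by
  apply le_of_two_mul_le_of_parity
  have hν : G.matchingNumber ≤ k - 1 := by
    obtain ⟨M, hM, hMcard⟩ := G.exists_isMatchingIn_card_eq_matchingNumber
    have := hmatch M hM
    omega
  calc 2 * #G.edgeFinset ≤ (2 * G.matchingNumber + 1) * (k - 1) := by
        convert G.two_mul_card_edgeFinset_le_of_closedNbhdsMeetAtDegree
          (fun v => Nat.le_sub_one_of_lt (degree_lt_of_not_hasStar hstar v))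
          (closedNbhdsMeetAtDegree_of_not_hasTwoDisjointStars h2star)
    _ ≤ (2 * (k - 1) + 1) * (k - 1) := by gcongr

/-- A `{K_{1,k}, kK₂, 2K_{1,k-1}}`-free graph has at most `k² - (3k-1)/2` edges for
odd `k`, and at most `k² - 3k/2` edges for even `k`. -/
theorem stmt6 {V : Type*} [Fintype V] [DecidableEq V]
    (G : SimpleGraph V) [DecidableRel G.Adj] (k : ℕ) (hk : 1 ≤ k)
    (hstar : ¬ HasStar G k)
    (hmatch : ∀ M : Finset (Sym2 V), IsMatchingIn G M → M.card < k)
    (h2star : ¬ HasTwoDisjointStars G (k - 1)) :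
    (Odd k → G.edgeFinset.card ≤ k ^ 2 - (3 * k - 1) / 2) ∧
      (Even k → G.edgeFinset.card ≤ k ^ 2 - 3 * k / 2) :=
  stmt6_general G k hstar hmatch h2star
end

section
/- Fix an integer k ≥ 2 and define f(x) = x(x−1)/2 for integers 1 ≤ x ≤ k−1 and f(x) = ⌊(k−1)x/2⌋ for integers x ≥ k. Then for all odd integers x₁, x₂ with 1 ≤ x₁ ≤ k−1 and x₁ ≤ x₂, one has f(x₁) + f(x₂) ≤ f(x₁ + x₂ − 1). -/
/-!
Write `x₁ = 2a + 1`, `x₂ = 2b + 1` and `m = k - 1`, so that `x₁ + x₂ - 1 = x₂ + 2a`. Below `m`,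
`f (2n + 1) = (2n + 1) n`, and above `m` adding `2a` to the argument adds exactly `m a` to `f`.
If `x₂ + 2a ≤ m` the inequality is `0 ≤ 4ab`. If `x₂ ≤ m < x₂ + 2a`, then `2 f xᵢ = xᵢ (xᵢ - 1) ≤ m (xᵢ - 1)`
and the two bounds add up to `m (x₂ + 2a)`. If `m < x₂`, the gain `m a` dominates `f x₁ = x₁ a`.
-/

/-- The function `f(x) = x(x-1)/2` for `x ≤ k-1` and `f(x) = ⌊(k-1)x/2⌋` for `x ≥ k`. -/
def f (k x : ℕ) : ℕ := if x ≤ k - 1 then x * (x - 1) / 2 else (k - 1) * x / 2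

lemma f_two_mul_add_one_of_le {k a : ℕ} (h : 2 * a + 1 ≤ k - 1) :
    f k (2 * a + 1) = (2 * a + 1) * a := by
  rw [f, if_pos h, Nat.add_sub_cancel, mul_left_comm, Nat.mul_div_cancel_left _ two_pos]

lemma f_of_lt {k x : ℕ} (h : k - 1 < x) : f k x = (k - 1) * x / 2 :=
  if_neg h.not_ge

lemma f_add_two_mul_of_lt {k x : ℕ} (h : k - 1 < x) (a : ℕ) :
    f k (x + 2 * a) = f k x + (k - 1) * a := by
  rw [f_of_lt h, f_of_lt (h.trans_le (Nat.le_add_right x _)), mul_add, mul_left_comm,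
    Nat.add_mul_div_left _ _ two_pos]

theorem stmt9_general (k : ℕ) (x₁ x₂ : ℕ) (h₁ : Odd x₁) (h₂ : Odd x₂)
    (hx₁k : x₁ ≤ k - 1) :
    f k x₁ + f k x₂ ≤ f k (x₁ + x₂ - 1) := by
  obtain ⟨a, rfl⟩ := h₁
  obtain ⟨b, rfl⟩ := h₂
  rw [show 2 * a + 1 + (2 * b + 1) - 1 = 2 * b + 1 + 2 * a by omega, f_two_mul_add_one_of_le hx₁k]
  by_cases hb : 2 * b + 1 ≤ k - 1
  · rw [f_two_mul_add_one_of_le hb]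
    by_cases hab : 2 * b + 1 + 2 * a ≤ k - 1
    · rw [show 2 * b + 1 + 2 * a = 2 * (a + b) + 1 by ring, f_two_mul_add_one_of_le (by omega)]
      nlinarith
    · rw [f_of_lt (by omega), Nat.le_div_iff_mul_le two_pos]
      have ha' := Nat.mul_le_mul_right (2 * a) hx₁k
      have hb' := Nat.mul_le_mul_right (2 * b) hb
      nlinarith
  · rw [f_add_two_mul_of_lt (by omega)]
    have := Nat.mul_le_mul_right a hx₁k
    omega

theorem stmt9 (k : ℕ) (hk : 2 ≤ k) (x₁ x₂ : ℕ) (h₁ : Odd x₁) (h₂ : Odd x₂)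
    (hx₁ : 1 ≤ x₁) (hx₁k : x₁ ≤ k - 1) (hle : x₁ ≤ x₂) :
    f k x₁ + f k x₂ ≤ f k (x₁ + x₂ - 1) :=
  stmt9_general k x₁ x₂ h₁ h₂ hx₁k
end

section
/- Let k ≥ 3, s ≥ 1, p ≥ 1 be integers and suppose ν_j, Δ_j ≥ 0 satisfy: for each i and each j the constraint Δ_i + Σ_{j≠i} ν_j ≤ k−1, and suppose there exists an index i with ν_i ≤ Δ_i. Then Σ_j ν_j(Δ_j + 1) ≤ (k−1)² < k² − (3/2)k. -/
theorem Finset.sum_le_of_le_of_add_sum_erase_le {ι M : Type*} [DecidableEq ι] [AddCommMonoid M]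
    [PartialOrder M] [IsOrderedAddMonoid M] {s : Finset ι} {f : ι → M} {i : ι} (hi : i ∈ s)
    {a c : M} (hfi : f i ≤ a) (h : a + ∑ j ∈ s.erase i, f j ≤ c) : ∑ j ∈ s, f j ≤ c := by
  rw [← s.add_sum_erase f hi]
  exact (add_le_add_left hfi _).trans h

theorem Nat.sub_one_sq_lt_sq_sub_three_mul_div_two {k : ℕ} (hk : 3 ≤ k) :
    (k - 1) ^ 2 < k ^ 2 - 3 * k / 2 := by
  obtain ⟨n, rfl⟩ : ∃ n, k = n + 1 := ⟨k - 1, by omega⟩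
  have hsq : (n + 1) ^ 2 = n ^ 2 + 2 * n + 1 := by ring
  rw [Nat.add_sub_cancel, hsq]
  omega

theorem stmt14_general (k p : ℕ) (hk : 3 ≤ k)
    (ν Δ : Fin p → ℕ) (hΔ : ∀ j, Δ j ≤ k - 2)
    (hcon : ∀ i, Δ i + ∑ j ∈ Finset.univ.erase i, ν j ≤ k - 1)
    (hex : ∃ i, ν i ≤ Δ i) :
    (∑ j, ν j * (Δ j + 1)) ≤ (k - 1) ^ 2 ∧ (k - 1) ^ 2 < k ^ 2 - 3 * k / 2 := by
  obtain ⟨i, hi⟩ := hex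
  have hsum : ∑ j, ν j ≤ k - 1 :=
    Finset.sum_le_of_le_of_add_sum_erase_le (Finset.mem_univ i) hi (hcon i)
  refine ⟨?_, Nat.sub_one_sq_lt_sq_sub_three_mul_div_two hk⟩
  calc ∑ j, ν j * (Δ j + 1)
      ≤ ∑ j, ν j * (k - 1) :=
        Finset.sum_le_sum fun j _ => Nat.mul_le_mul_left _ (by have := hΔ j; omega)
    _ = (∑ j, ν j) * (k - 1) := (Finset.sum_mul _ _ _).symm
    _ ≤ (k - 1) ^ 2 := by rw [sq]; exact Nat.mul_le_mul_right _ hsum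

theorem stmt14 (k p : ℕ) (hk : 3 ≤ k) (hp : 1 ≤ p)
    (ν Δ : Fin p → ℕ) (hΔ : ∀ j, Δ j ≤ k - 2)
    (hcon : ∀ i, Δ i + ∑ j ∈ Finset.univ.erase i, ν j ≤ k - 1)
    (hex : ∃ i, ν i ≤ Δ i) :
    (∑ j, ν j * (Δ j + 1)) ≤ (k - 1) ^ 2 ∧ (k - 1) ^ 2 < k ^ 2 - 3 * k / 2 :=
  stmt14_general k p hk ν Δ hΔ hcon hex
end

section
/- Let p ≥ 3 and let F be a graph with an embedding of its blown-up version: if F is a tree on at most ℓ vertices with ℓ = |V(F^{p+1})|, then F^{p+1} is a subgraph of the join P_ℓ ∨ K((p−1)ℓ; p−1) of a path on ℓ vertices with the balanced complete (p−1)-partite graph with parts of size ℓ. -/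
/-!
A tree is bipartite: put its two colour classes into parts `0` and `1` of the multipartite
graph. In the clique replacing the `k`-th edge, send the new vertices `0` and `1` to the path
edge `{2k, 2k+1}` and the new vertex `i ≥ 2` to part `i`. Each new vertex is then adjacent to
both endpoints of its edge, which lie in parts `0` and `1`, and to the other new vertices of its
clique. Since `p - 1 ≥ 2`, the blow-up has `ℓ ≥ 2 |E(F)|` vertices, so the path is long enough.
-/

/-- The join `G ∨ H` of two graphs: take disjoint copies of `G` and `H` and add all
edges between them. -/
def graphJoin {V W : Type*} (G : SimpleGraph V) (H : SimpleGraph W) :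
    SimpleGraph (V ⊕ W) where
  Adj x y :=
    match x, y with
    | Sum.inl a, Sum.inl b => G.Adj a b
    | Sum.inr a, Sum.inr b => H.Adj a b
    | _, _ => True
  symm := by
    constructor
    rintro (a | a) (b | b) h
    · exact h.symm
    · trivial
    · trivial
    · exact h.symm
  loopless := by
    constructor
    rintro (a | a) h
    · exact G.irrefl h
    · exact H.irrefl h

/-- The edge blow-up `F^{q+2}` of `F`: each edge of `F` is replaced by a clique on its two
endpoints together with `q` new vertices, the new vertices being distinct for distinct
edges. (For the blow-up by cliques of size `p+1`, take `q = p-1`.) -/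
def edgeBlowup {V : Type*} (F : SimpleGraph V) (q : ℕ) :
    SimpleGraph (V ⊕ (F.edgeSet × Fin q)) where
  Adj x y :=
    match x, y with
    | Sum.inl a, Sum.inl b => F.Adj a b
    | Sum.inl a, Sum.inr e => a ∈ (e.1 : Sym2 V)
    | Sum.inr e, Sum.inl a => a ∈ (e.1 : Sym2 V)
    | Sum.inr e, Sum.inr e' => e.1 = e'.1 ∧ e.2 ≠ e'.2
  symm := by
    constructor
    rintro (a | e) (b | e') h
    · exact h.symm
    · exact h
    · exact h
    · exact ⟨h.1.symm, h.2.symm⟩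
  loopless := by
    constructor
    rintro (a | e) h
    · exact F.irrefl h
    · exact h.2 rfl

open SimpleGraph

section

variable {V W : Type*} {G : SimpleGraph V} {H : SimpleGraph W}

@[simp] lemma graphJoin_adj_inl_inl {a b : V} : (graphJoin G H).Adj (.inl a) (.inl b) ↔ G.Adj a b :=
  Iff.rfl

@[simp] lemma graphJoin_adj_inr_inr {a b : W} : (graphJoin G H).Adj (.inr a) (.inr b) ↔ H.Adj a b :=
  Iff.rfl

@[simp] lemma graphJoin_adj_inl_inr {a : V} {b : W} : (graphJoin G H).Adj (.inl a) (.inr b) :=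
  trivial

@[simp] lemma graphJoin_adj_inr_inl {a : W} {b : V} : (graphJoin G H).Adj (.inr a) (.inl b) :=
  trivial

end

section

variable {V : Type*} {F : SimpleGraph V} {q ℓ m : ℕ}

def edgeBlowupToJoin (hq : 2 ≤ q) (hm : 2 * m ≤ ℓ) (c : F.Coloring (Fin 2)) (pos : V ↪ Fin ℓ)
    (slot : F.edgeSet ↪ Fin m) : V ⊕ (F.edgeSet × Fin q) → Fin ℓ ⊕ (Σ _ : Fin q, Fin ℓ)
  | .inl a => .inr ⟨Fin.castLE hq (c a), pos a⟩
  | .inr (e, i) =>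
    if h : (i : ℕ) < 2 then .inl ⟨2 * slot e + i, by omega⟩
    else .inr ⟨i, Fin.castLE (by omega) (slot e)⟩

variable (hq : 2 ≤ q) (hm : 2 * m ≤ ℓ) (c : F.Coloring (Fin 2)) (pos : V ↪ Fin ℓ)
  (slot : F.edgeSet ↪ Fin m)

lemma edgeBlowupToJoin_map_adj {x y : V ⊕ (F.edgeSet × Fin q)} (h : (edgeBlowup F q).Adj x y) :
    (graphJoin (pathGraph ℓ)
      (completeMultipartiteGraph fun _ : Fin q => Fin ℓ)).Adj
      (edgeBlowupToJoin hq hm c pos slot x) (edgeBlowupToJoin hq hm c pos slot y) := by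
  rcases x with a | ⟨e, i⟩ <;> rcases y with b | ⟨e', j⟩
  · simpa [edgeBlowupToJoin, Fin.ext_iff] using c.valid h
  · by_cases hj : (j : ℕ) < 2
    · simp [edgeBlowupToJoin, hj]
    · simp only [edgeBlowupToJoin, hj, ↓reduceDIte, graphJoin_adj_inr_inr, comap_adj,
        top_adj, ne_eq, Fin.ext_iff, Fin.val_castLE]
      omega
  · by_cases hi : (i : ℕ) < 2
    · simp [edgeBlowupToJoin, hi]
    · simp only [edgeBlowupToJoin, hi, ↓reduceDIte, graphJoin_adj_inr_inr, comap_adj,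
        top_adj, ne_eq, Fin.ext_iff, Fin.val_castLE]
      omega
  · obtain ⟨rfl, hij⟩ : e = e' ∧ (i : ℕ) ≠ j := ⟨h.1, Fin.val_ne_of_ne h.2⟩
    by_cases hi : (i : ℕ) < 2 <;> by_cases hj : (j : ℕ) < 2
    · simp only [edgeBlowupToJoin, hi, hj, ↓reduceDIte, graphJoin_adj_inl_inl,
        pathGraph_adj]
      omega
    · simp [edgeBlowupToJoin, hi, hj]
    · simp [edgeBlowupToJoin, hi, hj]
    · simpa [edgeBlowupToJoin, hi, hj, Fin.ext_iff] using hij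

lemma edgeBlowupToJoin_injective : Function.Injective (edgeBlowupToJoin hq hm c pos slot) := by
  rintro (a | ⟨e, i⟩) (b | ⟨e', j⟩) h
  · simp only [edgeBlowupToJoin, Sum.inr.injEq, Sigma.mk.inj_iff] at h
    rw [pos.injective (eq_of_heq h.2)]
  · by_cases hj : (j : ℕ) < 2
    · simp [edgeBlowupToJoin, hj] at h
    · simp only [edgeBlowupToJoin, hj, ↓reduceDIte, Sum.inr.injEq, Sigma.mk.injEq, Fin.ext_iff,
        Fin.val_castLE, heq_eq_eq] at h
      omega
  · by_cases hi : (i : ℕ) < 2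
    · simp [edgeBlowupToJoin, hi] at h
    · simp only [edgeBlowupToJoin, hi, ↓reduceDIte, Sum.inr.injEq, Sigma.mk.injEq, Fin.ext_iff,
        Fin.val_castLE, heq_eq_eq] at h
      omega
  · suffices (slot e : ℕ) = slot e' ∧ (i : ℕ) = j by
      rw [slot.injective (Fin.ext this.1), Fin.ext this.2]
    by_cases hi : (i : ℕ) < 2 <;> by_cases hj : (j : ℕ) < 2
    · simp only [edgeBlowupToJoin, hi, hj, ↓reduceDIte, Sum.inl.injEq, Fin.mk.injEq] at h
      omega
    · simp [edgeBlowupToJoin, hi, hj] at h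
    · simp [edgeBlowupToJoin, hi, hj] at h
    · simpa [edgeBlowupToJoin, hi, hj, Fin.ext_iff, and_comm] using h

end

theorem exists_injective_hom_edgeBlowup_graphJoin {V : Type*} {F : SimpleGraph V} {q ℓ : ℕ}
    [Fintype V] [Fintype F.edgeSet] (hq : 2 ≤ q) (hF : F.Colorable 2) (hV : Fintype.card V ≤ ℓ)
    (hE : 2 * Fintype.card F.edgeSet ≤ ℓ) :
    ∃ φ : edgeBlowup F q →g
        graphJoin (pathGraph ℓ) (completeMultipartiteGraph fun _ : Fin q => Fin ℓ),
      Function.Injective φ := by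
  obtain ⟨c⟩ := hF
  let pos : V ↪ Fin ℓ := (Fintype.equivFin V).toEmbedding.trans (Fin.castLEEmb hV)
  let slot : F.edgeSet ↪ Fin _ := (Fintype.equivFin F.edgeSet).toEmbedding
  exact ⟨⟨edgeBlowupToJoin hq hE c pos slot, edgeBlowupToJoin_map_adj hq hE c pos slot⟩,
    edgeBlowupToJoin_injective hq hE c pos slot⟩

/-- The edge blow-up of a tree `F` by cliques of size `p+1` (with `p ≥ 3`) embeds into
the join of the path `P_ℓ` with the complete `(p-1)`-partite graph with parts of
size `ℓ`, where `ℓ` is the number of vertices of the blow-up. -/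
theorem stmt18 {V : Type*} [Fintype V] [DecidableEq V]
    (p : ℕ) (hp : 3 ≤ p) (F : SimpleGraph V) [DecidableRel F.Adj] (hF : F.IsTree)
    (ℓ : ℕ) (hℓ : ℓ = Fintype.card (V ⊕ (F.edgeSet × Fin (p - 1)))) :
    ∃ φ : edgeBlowup F (p - 1) →g
        graphJoin (SimpleGraph.pathGraph ℓ)
          (SimpleGraph.completeMultipartiteGraph fun _ : Fin (p - 1) => Fin ℓ),
      Function.Injective φ := by
  have hq : 2 ≤ p - 1 := by omega
  rw [Fintype.card_sum, Fintype.card_prod, Fintype.card_fin] at hℓ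
  have hE : 2 * Fintype.card F.edgeSet ≤ Fintype.card F.edgeSet * (p - 1) := by
    rw [mul_comm]
    exact Nat.mul_le_mul_left _ hq
  exact exists_injective_hom_edgeBlowup_graphJoin hq hF.colorable_two (by omega) (by omega)
end

section
/- Let p ≥ 3 and let F be a tree with ℓ = |V(F^{p+1})|. Then F^{p+1} is a subgraph of ℓP₂ ∨ K(2(p−1)ℓ; p−1), the join of a matching of size ℓ with the balanced complete (p−1)-partite graph with parts of size 2ℓ. -/
/-- The graph `ℓP₂`: a perfect matching of `ℓ` disjoint edges. -/
def matchingGraph (ℓ : ℕ) : SimpleGraph (Fin ℓ × Fin 2) where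
  Adj x y := x.1 = y.1 ∧ x.2 ≠ y.2
  symm := by
    constructor
    rintro x y ⟨h1, h2⟩
    exact ⟨h1.symm, h2.symm⟩
  loopless := by
    constructor
    rintro x ⟨h1, h2⟩
    exact h2 rfl

/-!
Properly 2-colour the tree and send its vertices, by colour, into two parts of the
multipartite graph, injectively by an indexing of `V`. Of the `p - 1` new vertices on an
edge `e`, two become the ends of the `e`-th matching edge and the others go to the remaining
parts, one per part, at index `e`. Every adjacency of the blow-up then joins two different
parts, the two sides of the join, or the two ends of one matching edge.
-/

open SimpleGraph Function

section

variable {V : Type*} {F : SimpleGraph V} {q m n : ℕ}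

def edgeBlowupHomJoin (c : F.Coloring (Fin 2)) (hq : 2 ≤ q) (fV : V ↪ Fin n)
    (fE : F.edgeSet ↪ Fin m) (gE : F.edgeSet ↪ Fin n) :
    edgeBlowup F q →g
      graphJoin (matchingGraph m) (completeMultipartiteGraph fun _ : Fin q => Fin n) where
  toFun
    | .inl a => .inr ⟨Fin.castLE hq (c a), fV a⟩
    | .inr (e, k) => if h : k.val < 2 then .inl (fE e, ⟨k, h⟩) else .inr ⟨k, gE e⟩
  map_rel' := by
    rintro (a | ⟨e, k⟩) (b | ⟨e', k'⟩) h
    · simpa [graphJoin, Fin.ext_iff] using c.valid h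
    · dsimp only
      split_ifs with hk
      · trivial
      · simp [graphJoin, Fin.ext_iff]; omega
    · dsimp only
      split_ifs with hk
      · trivial
      · simp [graphJoin, Fin.ext_iff]; omega
    · obtain ⟨rfl, hkk⟩ : e = e' ∧ k ≠ k' := h
      dsimp only
      split_ifs <;> simp_all [graphJoin, matchingGraph, Fin.ext_iff]

lemma edgeBlowupHomJoin_injective (c : F.Coloring (Fin 2)) (hq : 2 ≤ q) (fV : V ↪ Fin n)
    (fE : F.edgeSet ↪ Fin m) (gE : F.edgeSet ↪ Fin n) :
    Injective (edgeBlowupHomJoin c hq fV fE gE) := by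
  rintro (a | ⟨e, k⟩) (b | ⟨e', k'⟩) h <;>
    simp only [edgeBlowupHomJoin, RelHom.coeFn_mk] at h <;> (try split_ifs at h) <;>
    simp_all [Fin.ext_iff] <;> omega

theorem edgeBlowup_isContained_graphJoin [Fintype V] [Fintype F.edgeSet] (hF : F.Colorable 2)
    (hq : 2 ≤ q) (hV : Fintype.card V ≤ n) (hEm : Fintype.card F.edgeSet ≤ m)
    (hEn : Fintype.card F.edgeSet ≤ n) :
    edgeBlowup F q ⊑
      graphJoin (matchingGraph m) (completeMultipartiteGraph fun _ : Fin q => Fin n) := by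
  obtain ⟨c⟩ := hF
  obtain ⟨fV⟩ := Function.Embedding.nonempty_of_card_le (hV.trans_eq (Fintype.card_fin n).symm)
  obtain ⟨fE⟩ := Function.Embedding.nonempty_of_card_le (hEm.trans_eq (Fintype.card_fin m).symm)
  obtain ⟨gE⟩ := Function.Embedding.nonempty_of_card_le (hEn.trans_eq (Fintype.card_fin n).symm)
  exact ⟨(edgeBlowupHomJoin c hq fV fE gE).toCopy (edgeBlowupHomJoin_injective c hq fV fE gE)⟩

end

/-- The edge blow-up of a tree `F` by cliques of size `p+1` (with `p ≥ 3`) embeds into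
the join of the matching `ℓP₂` with the complete `(p-1)`-partite graph with parts of
size `2ℓ`, where `ℓ` is the number of vertices of the blow-up. -/
theorem stmt19 {V : Type*} [Fintype V] [DecidableEq V]
    (p : ℕ) (hp : 3 ≤ p) (F : SimpleGraph V) [DecidableRel F.Adj] (hF : F.IsTree)
    (ℓ : ℕ) (hℓ : ℓ = Fintype.card (V ⊕ (F.edgeSet × Fin (p - 1)))) :
    ∃ φ : edgeBlowup F (p - 1) →g
        graphJoin (matchingGraph ℓ)
          (SimpleGraph.completeMultipartiteGraph fun _ : Fin (p - 1) => Fin (2 * ℓ)),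
      Function.Injective φ := by
  have hℓ' : ℓ = Fintype.card V + Fintype.card F.edgeSet * (p - 1) := by
    simp [hℓ, Fintype.card_sum, Fintype.card_prod]
  have hE : Fintype.card F.edgeSet ≤ ℓ := by
    rw [hℓ']
    exact (Nat.le_mul_of_pos_right _ (by omega)).trans le_add_self
  obtain ⟨f⟩ := edgeBlowup_isContained_graphJoin (q := p - 1) (m := ℓ) (n := 2 * ℓ)
    hF.colorable_two (by omega) (by omega) hE (by omega)
  exact ⟨f.toHom, f.injective⟩
end
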